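/- Let R̂₀ be a complete discrete valuation ring with uniformizer t, and let R̂₁, R̂₂ ≤ R̂₀ be t-adically complete subrings containing t. Let F₀ and F₁ be the fraction fields of R̂₀ and R̂₁, and assume that R̂₁/tR̂₁ is a domain whose fraction field equals R̂₀/tR̂₀. Suppose that for each A ∈ GL_n(R̂₀) satisfying A ≡ I (mod t·Mat_n(R̂₀)) there exist A₁ ∈ GL_n(F₁) and A₂ ∈ GL_n(R̂₂) such that A = A₁A₂. Then for every matrix A ∈ Mat_n(R̂₀) with nonzero determinant there exist A₁ ∈ GL_n(F₁) and A₂ ∈ GL_n(R̂₂) such that A = A₁A₂. -/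

import Mathlib

/-! Write `det A = u tᵏ` with `u` a unit, so that `C = u⁻¹ adj A` satisfies `C A = tᵏ`.
Since `Frac(R̂₁/t) = R̂₀/t`, successive approximation modulo powers of `t` gives
`c C ≡ B (mod tᵏ⁺¹)` with `B` over `R̂₁` and `c ∈ R̂₁` a unit of `R̂₀`. Then
`B A = tᵏ c (1 - t N)`, and `1 - t N ≡ I (mod t)` factors by hypothesis as `A₁ A₂`; hence
`A = (tᵏ c B⁻¹ A₁) A₂` with `tᵏ c B⁻¹ A₁ ∈ GLₙ(F₁)`. -/

section

variable (R₀ : Type) [CommRing R₀] [IsDomain R₀]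
  (R₁ R₂ : Subring R₀) (n : ℕ)

/-- The factorization property: (the image in `Matₙ(F₀)` of) a matrix `A` over `R̂₀`
factors as `A = A₁ A₂`, where `A₁ ∈ GLₙ(F₁)` (an invertible matrix whose entries are
fractions `b/c` with `b, c ∈ R̂₁`) and `A₂ ∈ GLₙ(R̂₂)`. -/
def FactorsGL (A : Matrix (Fin n) (Fin n) R₀) : Prop :=
  ∃ A₁ : Matrix (Fin n) (Fin n) (FractionRing R₀),
    IsUnit A₁ ∧
    (∀ i j, ∃ b c : ↥R₁, c ≠ 0 ∧
      A₁ i j * algebraMap R₀ (FractionRing R₀) (c : R₀) =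
        algebraMap R₀ (FractionRing R₀) (b : R₀)) ∧
    ∃ A₂ : Matrix (Fin n) (Fin n) ↥R₂,
      IsUnit A₂ ∧
      A.map (algebraMap R₀ (FractionRing R₀)) =
        A₁ * A₂.map (fun x => algebraMap R₀ (FractionRing R₀) (x : R₀))

end

open Matrix

section Approximation

variable {R : Type*} [CommRing R] {S : Subring R} {t : R}

theorem exists_pow_dvd_mul_sub (ht : Prime t) (htS : t ∈ S)
    (hS : ∀ a : R, ∃ b c : S, ¬ t ∣ (c : R) ∧ t ∣ a * c - b) (m : ℕ) (a : R) :
    ∃ b c : S, ¬ t ∣ (c : R) ∧ t ^ m ∣ a * c - b := by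
  induction m with
  | zero => exact ⟨0, 1, by simpa using ht.not_dvd_one, by simp⟩
  | succ m ih =>
    obtain ⟨b₀, c₀, hc₀, d, hd⟩ := ih
    -- approximate the error quotient `d = (a c₀ - b₀) / tᵐ` modulo `t` as well
    obtain ⟨b₁, c₁, hc₁, e, he⟩ := hS d
    refine ⟨b₀ * c₁ + ⟨t, htS⟩ ^ m * b₁, c₀ * c₁, ?_, e, ?_⟩
    · simpa using ht.not_dvd_mul hc₀ hc₁
    · push_cast
      linear_combination (c₁ : R) * hd + t ^ m * he

theorem exists_pow_dvd_mul_sub_pi {ι : Type*} [Fintype ι] (ht : Prime t) (htS : t ∈ S)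
    (hS : ∀ a : R, ∃ b c : S, ¬ t ∣ (c : R) ∧ t ∣ a * c - b) (m : ℕ) (a : ι → R) :
    ∃ (b : ι → S) (c : S), ¬ t ∣ (c : R) ∧ ∀ i, t ^ m ∣ a i * c - b i := by
  choose b c hc hbc using fun i => exists_pow_dvd_mul_sub ht htS hS m (a i)
  choose d hd using fun i => Finset.dvd_prod_of_mem c (Finset.mem_univ i)
  refine ⟨fun i => b i * d i, ∏ i, c i, ?_, fun i => ?_⟩
  · push_cast
    rw [ht.dvd_finsetProd_iff]
    rintro ⟨i, -, hi⟩
    exact hc i hi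
  · rw [hd i, Subring.coe_mul, Subring.coe_mul, ← mul_assoc, ← sub_mul]
    exact (hbc i).mul_right _

end Approximation

section LocalRing

variable {R : Type*} [CommRing R] [IsLocalRing R] {n : Type*} [Fintype n] [DecidableEq n]

theorem Matrix.isUnit_one_sub_smul {t : R} (ht : t ∈ IsLocalRing.maximalIdeal R)
    (N : Matrix n n R) : IsUnit (1 - t • N) := by
  have hres : (1 - t • N).map (IsLocalRing.residue R) = 1 := by
    rw [← IsLocalRing.residue_eq_zero_iff] at ht
    ext i j
    simp [Matrix.one_apply, apply_ite, ht]
  rw [isUnit_iff_isUnit_det]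
  refine IsUnit.of_map (IsLocalRing.residue R) _ ?_
  rw [RingHom.map_det, RingHom.mapMatrix_apply, hres, det_one]
  exact isUnit_one

end LocalRing

section DiscreteValuationRing

variable {R : Type*} [CommRing R] [IsDomain R] [IsDiscreteValuationRing R] {t : R}
  {n : Type*} [Fintype n] [DecidableEq n]

theorem Irreducible.isUnit_of_not_dvd (ht : Irreducible t) {c : R} (hc : ¬ t ∣ c) : IsUnit c := by
  by_contra h
  have hmem : c ∈ IsLocalRing.maximalIdeal R := h
  rw [ht.maximalIdeal_eq, Ideal.mem_span_singleton] at hmem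
  exact hc hmem

theorem Matrix.exists_mul_eq_pow_smul_one (ht : Irreducible t) {A : Matrix n n R}
    (hA : A.det ≠ 0) : ∃ (k : ℕ) (C : Matrix n n R), C * A = t ^ k • 1 := by
  obtain ⟨k, u, hu⟩ := IsDiscreteValuationRing.eq_unit_mul_pow_irreducible hA ht
  refine ⟨k, (↑u⁻¹ : R) • A.adjugate, ?_⟩
  rw [smul_mul, adjugate_mul, hu, smul_smul, ← mul_assoc, Units.inv_mul, one_mul]

theorem exists_mul_eq_smul_one_sub_smul {S : Subring R} (ht : Irreducible t) (htS : t ∈ S)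
    (hS : ∀ a : R, ∃ b c : S, ¬ t ∣ (c : R) ∧ t ∣ a * c - b) {A : Matrix n n R}
    (hA : A.det ≠ 0) :
    ∃ (B : Matrix n n S) (s : S) (N : Matrix n n R),
      s ≠ 0 ∧ B.map S.subtype * A = (s : R) • (1 - t • N) := by
  obtain ⟨k, C, hCA⟩ := exists_mul_eq_pow_smul_one ht hA
  obtain ⟨b, c, hc, hbc⟩ := exists_pow_dvd_mul_sub_pi ht.prime htS hS (k + 1)
    fun p : n × n => C p.1 p.2
  choose E hE using fun i j => hbc (i, j)
  obtain ⟨u, hu⟩ := ht.isUnit_of_not_dvd hc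
  set B : Matrix n n S := of fun i j => b (i, j)
  have hB : B.map S.subtype = (c : R) • C - t ^ (k + 1) • of E := by
    ext i j
    simp only [B, Subring.coe_subtype, map_apply, of_apply, Matrix.sub_apply,
      Matrix.smul_apply, smul_eq_mul]
    linear_combination -hE i j
  refine ⟨B, ⟨t, htS⟩ ^ k * c, (↑u⁻¹ : R) • (of E * A), ?_, ?_⟩
  · rw [Ne, ← Subring.coe_eq_zero_iff]
    push_cast
    exact mul_ne_zero (pow_ne_zero _ ht.ne_zero) fun h => hc (h ▸ dvd_zero t)
  · rw [hB, sub_mul, smul_mul, hCA, smul_mul]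
    have hcu : (c : R) * ↑u⁻¹ = 1 := by rw [← hu, Units.mul_inv]
    ext i j
    simp only [Matrix.sub_apply, Matrix.smul_apply, smul_eq_mul, SubmonoidClass.mk_pow,
      Subring.coe_mul]
    linear_combination (t ^ (k + 1) * (of E * A) i j) * hcu

end DiscreteValuationRing

theorem Matrix.isUnit_map_iff {m K L : Type*} [Fintype m] [DecidableEq m] [Field K] [Field L]
    (f : K →+* L) (M : Matrix m m K) : IsUnit (M.map f) ↔ IsUnit M := by
  simp only [isUnit_iff_isUnit_det, ← RingHom.mapMatrix_apply, ← RingHom.map_det,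
    isUnit_iff_ne_zero, map_ne_zero]

section FractionField

variable {R₀ : Type} [CommRing R₀] [IsDomain R₀] (R₁ : Subring R₀)

noncomputable def fractionSubfield : Subfield (FractionRing R₀) :=
  Subfield.closure (R₁.map (algebraMap R₀ (FractionRing R₀)))

theorem algebraMap_mem_fractionSubfield (r : R₁) :
    algebraMap R₀ (FractionRing R₀) r ∈ fractionSubfield R₁ :=
  Subfield.subset_closure ⟨r, r.2, rfl⟩

noncomputable def toFractionSubfield : R₁ →+* fractionSubfield R₁ :=
  ((algebraMap R₀ (FractionRing R₀)).comp R₁.subtype).codRestrict _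
    (algebraMap_mem_fractionSubfield R₁)

variable {R₁}

theorem toFractionSubfield_injective : Function.Injective (toFractionSubfield R₁) :=
  fun _ _ h =>
    Subtype.ext (IsFractionRing.injective R₀ (FractionRing R₀) (congrArg Subtype.val h))

theorem mem_fractionSubfield_iff {x : FractionRing R₀} :
    x ∈ fractionSubfield R₁ ↔ ∃ b c : R₁, c ≠ 0 ∧
      x * algebraMap R₀ (FractionRing R₀) c = algebraMap R₀ (FractionRing R₀) b := by
  have hφ {c : R₁} (hc : c ≠ 0) : algebraMap R₀ (FractionRing R₀) c ≠ 0 := fun h =>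
    (map_ne_zero_iff _ toFractionSubfield_injective).2 hc (Subtype.ext h)
  constructor
  · intro hx
    rw [fractionSubfield, Subfield.mem_closure_iff, Subring.closure_eq] at hx
    obtain ⟨_, ⟨b, hb, rfl⟩, _, ⟨c, hc, rfl⟩, rfl⟩ := hx
    by_cases hc0 : (⟨c, hc⟩ : R₁) = 0
    · exact ⟨0, 1, one_ne_zero, by simp_all⟩
    · exact ⟨⟨b, hb⟩, ⟨c, hc⟩, hc0, div_mul_cancel₀ _ (hφ hc0)⟩
  · rintro ⟨b, c, hc, hx⟩
    rw [← eq_div_iff (hφ hc)] at hx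
    rw [hx]
    exact div_mem (algebraMap_mem_fractionSubfield R₁ b) (algebraMap_mem_fractionSubfield R₁ c)

variable {R₂ : Subring R₀} {n : ℕ}

theorem factorsGL_iff {A : Matrix (Fin n) (Fin n) R₀} :
    FactorsGL R₀ R₁ R₂ n A ↔ ∃ W : Matrix (Fin n) (Fin n) (fractionSubfield R₁), IsUnit W ∧
      ∃ A₂ : Matrix (Fin n) (Fin n) R₂, IsUnit A₂ ∧
        A.map (algebraMap R₀ (FractionRing R₀)) = W.map (fractionSubfield R₁).subtype *
          A₂.map (fun x => algebraMap R₀ (FractionRing R₀) (x : R₀)) := by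
  constructor
  · rintro ⟨A₁, hA₁, hmem, A₂, hA₂, h⟩
    refine ⟨of fun i j => ⟨A₁ i j, mem_fractionSubfield_iff.2 (hmem i j)⟩, ?_, A₂, hA₂, h⟩
    exact (Matrix.isUnit_map_iff (fractionSubfield R₁).subtype _).1 hA₁
  · rintro ⟨W, hW, A₂, hA₂, h⟩
    exact ⟨W.map (fractionSubfield R₁).subtype, (Matrix.isUnit_map_iff _ _).2 hW,
      fun i j => mem_fractionSubfield_iff.1 (W i j).2, A₂, hA₂, h⟩

theorem FactorsGL.smul {U : Matrix (Fin n) (Fin n) R₀} {s : R₁} (hs : s ≠ 0)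
    (h : FactorsGL R₀ R₁ R₂ n U) : FactorsGL R₀ R₁ R₂ n ((s : R₀) • U) := by
  obtain ⟨W, hW, A₂, hA₂, hU⟩ := factorsGL_iff.1 h
  refine factorsGL_iff.2 ⟨toFractionSubfield R₁ s • W, ?_, A₂, hA₂, ?_⟩
  · rw [isUnit_iff_isUnit_det, det_smul]
    exact ((map_ne_zero_iff _ toFractionSubfield_injective).2 hs).isUnit.pow _ |>.mul
      ((isUnit_iff_isUnit_det _).1 hW)
  · rw [Matrix.map_smul' _ _ _ (map_mul _), hU, ← Matrix.smul_mul]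
    rfl

theorem FactorsGL.of_mul_left {A : Matrix (Fin n) (Fin n) R₀} (B : Matrix (Fin n) (Fin n) R₁)
    (h : FactorsGL R₀ R₁ R₂ n (B.map R₁.subtype * A)) : FactorsGL R₀ R₁ R₂ n A := by
  obtain ⟨W, hW, A₂, hA₂, hBA⟩ := factorsGL_iff.1 h
  set Bk := B.map (toFractionSubfield R₁)
  have hBk : Bk.map (fractionSubfield R₁).subtype =
      (B.map R₁.subtype).map (algebraMap R₀ (FractionRing R₀)) := rfl
  rw [Matrix.map_mul, ← hBk] at hBA
  have hA₂' : IsUnit (A₂.map fun x => algebraMap R₀ (FractionRing R₀) (x : R₀)) :=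
    hA₂.map ((algebraMap R₀ (FractionRing R₀)).comp R₂.subtype).mapMatrix
  have hBku : IsUnit Bk := by
    rw [← Matrix.isUnit_map_iff (fractionSubfield R₁).subtype]
    refine isUnit_of_mul_isUnit_left (y := A.map (algebraMap R₀ (FractionRing R₀))) ?_
    rw [hBA]
    exact ((Matrix.isUnit_map_iff _ _).2 hW).mul hA₂'
  refine factorsGL_iff.2 ⟨Bk⁻¹ * W, (isUnit_nonsing_inv_iff.2 hBku).mul hW, A₂, hA₂, ?_⟩
  rw [Matrix.map_mul, Matrix.mul_assoc, ← hBA, ← Matrix.mul_assoc, ← Matrix.map_mul,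
    nonsing_inv_mul _ ((isUnit_iff_isUnit_det _).1 hBku)]
  simp

end FractionField

theorem matrix_factorization_reduction_general
    (R₀ : Type) [CommRing R₀] [IsDomain R₀] [IsDiscreteValuationRing R₀]
    (t : R₀) (ht : Irreducible t)
    (R₁ : Subring R₀) (htR₁ : t ∈ R₁)
    (R₂ : Subring R₀)
    -- the fraction field of `R̂₁/tR̂₁` is all of `R̂₀/tR̂₀`:
    (hfrac : ∀ a : R₀, ∃ b c : ↥R₁, ¬ t ∣ (c : R₀) ∧ t ∣ (a * (c : R₀) - (b : R₀)))
    (n : ℕ)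
    (hhyp : ∀ A : Matrix (Fin n) (Fin n) R₀, IsUnit A →
      (∀ i j, t ∣ (A - 1) i j) → FactorsGL R₀ R₁ R₂ n A) :
    ∀ A : Matrix (Fin n) (Fin n) R₀, A.det ≠ 0 → FactorsGL R₀ R₁ R₂ n A := by
  intro A hA
  obtain ⟨B, s, N, hs, hBA⟩ := exists_mul_eq_smul_one_sub_smul ht htR₁ hfrac hA
  have hU : FactorsGL R₀ R₁ R₂ n (1 - t • N) :=
    hhyp _ (isUnit_one_sub_smul ((IsLocalRing.mem_maximalIdeal t).2 ht.not_isUnit) N)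
      fun i j => ⟨-N i j, by simp⟩
  exact FactorsGL.of_mul_left B (hBA ▸ hU.smul hs)

/-- Let `R̂₀` be a complete discrete valuation ring with uniformizer `t`
and let `R̂₁, R̂₂ ≤ R̂₀` be `t`-adically complete subrings containing `t`, such that
`R̂₁/tR̂₁` injects into `R̂₀/tR̂₀` with fraction field all of `R̂₀/tR̂₀`.  If every
`A ∈ GLₙ(R̂₀)` with `A ≡ I (mod t)` factors as `A = A₁A₂` with `A₁ ∈ GLₙ(F₁)` and
`A₂ ∈ GLₙ(R̂₂)`, then every `A ∈ Matₙ(R̂₀)` with nonzero determinant factors in the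
same way. -/
theorem matrix_factorization_reduction
    (R₀ : Type) [CommRing R₀] [IsDomain R₀] [IsDiscreteValuationRing R₀]
    (t : R₀) (ht : Irreducible t)
    [IsAdicComplete (Ideal.span {t} : Ideal R₀) R₀]
    (R₁ : Subring R₀) (htR₁ : t ∈ R₁)
    [IsAdicComplete (Ideal.span {(⟨t, htR₁⟩ : ↥R₁)} : Ideal ↥R₁) ↥R₁]
    (R₂ : Subring R₀) (htR₂ : t ∈ R₂)
    [IsAdicComplete (Ideal.span {(⟨t, htR₂⟩ : ↥R₂)} : Ideal ↥R₂) ↥R₂]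
    -- `R̂₁/tR̂₁ → R̂₀/tR̂₀` is injective:
    (hinj : ∀ x : ↥R₁, t ∣ (x : R₀) → (⟨t, htR₁⟩ : ↥R₁) ∣ x)
    -- the fraction field of `R̂₁/tR̂₁` is all of `R̂₀/tR̂₀`:
    (hfrac : ∀ a : R₀, ∃ b c : ↥R₁, ¬ t ∣ (c : R₀) ∧ t ∣ (a * (c : R₀) - (b : R₀)))
    (n : ℕ)
    (hhyp : ∀ A : Matrix (Fin n) (Fin n) R₀, IsUnit A →
      (∀ i j, t ∣ (A - 1) i j) → FactorsGL R₀ R₁ R₂ n A) :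
    ∀ A : Matrix (Fin n) (Fin n) R₀, A.det ≠ 0 → FactorsGL R₀ R₁ R₂ n A :=
  matrix_factorization_reduction_general R₀ t ht R₁ htR₁ R₂ hfrac n hhyp
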